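/- arXiv:1301.5304 — 2 statements merged into one kernel-verified Lean document; each statement's English description precedes it below -/
import Mathlib

section
/- Let α be a type and Q a property of predicates on α (a property of individual concepts). Then universal quantification over individual concepts reduces to first-order quantification: (∀ X : α → Prop, C X → Q X) ↔ ∀ x : α, Q^b x, where Q^b x := ∃ X : α → Prop, C X ∧ X x ∧ Q X. -/
/-- An individual concept: a predicate holding of exactly one individual. -/
def C {α : Type*} (X : α → Prop) : Prop :=
  (∀ x y, X x → X y → x = y) ∧ (∃ x, X x)

/-! By extensionality, an individual concept true of `x` is the predicate `(· = x)`, so both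
sides say that `Q (· = x)` holds for every individual `x`. -/

theorem C_eq_self {α : Type*} (x : α) : C (· = x) :=
  ⟨fun _ _ ha hb => ha.trans hb.symm, x, rfl⟩

theorem C.eq_eq_of_apply {α : Type*} {X : α → Prop} {x : α} (hX : C X) (hx : X x) :
    X = (· = x) :=
  funext fun z => propext ⟨fun hz => hX.1 z x hz hx, fun hz => hz ▸ hx⟩

theorem exists_C_apply_and_iff {α : Type*} (Q : (α → Prop) → Prop) (x : α) :
    (∃ X : α → Prop, C X ∧ X x ∧ Q X) ↔ Q (· = x) :=
  ⟨fun ⟨_, hX, hx, hQ⟩ => hX.eq_eq_of_apply hx ▸ hQ, fun hQ => ⟨_, C_eq_self x, rfl, hQ⟩⟩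

theorem forall_concepts_iff_forall_individuals {α : Type*} (Q : (α → Prop) → Prop) :
    (∀ X : α → Prop, C X → Q X) ↔ ∀ x : α, ∃ X : α → Prop, C X ∧ X x ∧ Q X := by
  simp only [exists_C_apply_and_iff]
  refine ⟨fun h x => h _ (C_eq_self x), fun h X hX => ?_⟩
  obtain ⟨x, hx⟩ := hX.2
  exact hX.eq_eq_of_apply hx ▸ h x
end

section
/- In the limit, most natural numbers are not prime: the natural density of the prime numbers is zero, i.e. the prime counting function π satisfies lim_{n → ∞} π(n) / n = 0. In Lean terms: Filter.Tendsto (fun n : ℕ => (Nat.primeCounting n : ℝ) / n) Filter.atTop (nhds 0). -/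
open Filter Real

lemma Nat.eventually_primeCounting_div_le {ε : ℝ} (hε : 0 < ε) :
    ∀ᶠ n : ℕ in atTop, (n.primeCounting : ℝ) / n ≤ (Real.log 4 + ε) / Real.log n := by
  filter_upwards [tendsto_natCast_atTop_atTop.eventually
    (Chebyshev.eventually_primeCounting_le hε), eventually_gt_atTop 0] with n hπ hn
  rw [Nat.floor_natCast] at hπ
  rwa [div_le_iff₀ (by positivity), div_mul_eq_mul_div]

lemma tendsto_const_div_log_natCast_atTop (c : ℝ) :
    Tendsto (fun n : ℕ => c / log n) atTop (nhds 0) := by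
  simpa [div_eq_mul_inv] using
    (tendsto_log_atTop.comp tendsto_natCast_atTop_atTop).inv_tendsto_atTop.const_mul c

theorem prime_density_zero :
    Filter.Tendsto (fun n : ℕ => (Nat.primeCounting n : ℝ) / n)
      Filter.atTop (nhds 0) :=
  tendsto_of_tendsto_of_tendsto_of_le_of_le' tendsto_const_nhds
    (tendsto_const_div_log_natCast_atTop _) (.of_forall fun _ => by positivity)
    (Nat.eventually_primeCounting_div_le one_pos)
end
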